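/- Let (H, μ) be a probability space with projections π_L, π_R : H → H whose joint pushforward is μ × μ, and let p₁, ..., pₙ be a non-duplicating sequence of paths (compositions of projections, no path a suffix of another). Then for every measurable g : Hⁿ → [0,∞], ∫ g(p₁(σ), ..., pₙ(σ)) dμ(σ) = ∫ ⋯ ∫ g(σ₁, ..., σₙ) dμ(σ₁) ⋯ dμ(σₙ). That is, the random variables p₁, ..., pₙ are i.i.d. with law μ. -/

import Mathlib

/-!
Write every path as `q ++ [d]`, where `d` is the first projection it applies. The paths with
`d = L` are then evaluated at `π_L σ` and those with `d = R` at `π_R σ`; since `(π_L, π_R)`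
pushes `μ` forward to `μ ⊗ μ`, the two subfamilies are independent, and each one, with its last
letters removed, is again non-duplicating with shorter paths. Induction on the maximal length
ends with all paths empty, where non-duplication leaves at most one path.
-/

open MeasureTheory

namespace PathsIID

variable {H : Type*}

/-- A path is a list of directions (`true` = L, `false` = R), interpreted as a
composition of projections: `[d₁, …, dₙ](σ) = (π_{d₁} ∘ ⋯ ∘ π_{dₙ})(σ)`. -/
def pathEval (πL πR : H → H) : List Bool → H → H
  | [], σ => σ
  | d :: p, σ => (if d then πL else πR) (pathEval πL πR p σ)

lemma pathEval_append_singleton (πL πR : H → H) (q : List Bool) (d : Bool) (σ : H) :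
    pathEval πL πR (q ++ [d]) σ = pathEval πL πR q (if d then πL σ else πR σ) := by
  induction q with
  | nil => cases d <;> rfl
  | cons c q ih => simp only [List.cons_append, pathEval, ih]

def Nonduplicating {ι α : Type*} (p : ι → List α) : Prop :=
  Pairwise fun i j => ¬ p i <:+ p j

section Nonduplicating

variable {ι κ α : Type*}

lemma Nonduplicating.eq_of_eq_nil {p : ι → List α} (hp : Nonduplicating p) {j : ι}
    (hj : p j = []) (i : ι) : i = j :=
  by_contra fun hij => hp (Ne.symm hij) (hj ▸ List.nil_suffix)

lemma Nonduplicating.comp_of_append_singleton {q : ι → List α} {d : ι → α}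
    (hp : Nonduplicating fun i => q i ++ [d i]) {f : κ → ι} (hf : f.Injective)
    (hd : ∀ k k', d (f k) = d (f k')) : Nonduplicating (q ∘ f) := by
  intro k k' hkk' hsuf
  apply hp (hf.ne hkk')
  show q (f k) ++ [d (f k)] <:+ q (f k') ++ [d (f k')]
  rw [hd k k']
  exact List.suffix_append_self_iff.mpr hsuf

end Nonduplicating

lemma measurePreserving_of_lintegral_comp_eq {α β : Type*} [MeasurableSpace α]
    [MeasurableSpace β] {μ : Measure α} {ν : Measure β} {f : α → β} (hf : Measurable f)
    (h : ∀ g : β → ENNReal, Measurable g → ∫⁻ a, g (f a) ∂μ = ∫⁻ b, g b ∂ν) :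
    MeasurePreserving f μ ν :=
  ⟨hf, Measure.ext_of_lintegral _ fun g hg => by rw [lintegral_map hg hf, h g hg]⟩

lemma measurePreserving_const_pi_of_subsingleton {ι : Type*} [Fintype ι] [Subsingleton ι]
    [MeasurableSpace H] (μ : Measure H) [IsProbabilityMeasure μ] :
    MeasurePreserving (fun σ (_ : ι) => σ) μ (Measure.pi fun _ => μ) := by
  rcases isEmpty_or_nonempty ι with hι | ⟨⟨i⟩⟩
  · refine ⟨measurable_pi_lambda _ fun _ => measurable_id, ?_⟩
    have hconst : (fun (σ : H) (_ : ι) => σ) = fun _ => isEmptyElim :=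
      funext fun _ => funext isEmptyElim
    rw [hconst, Measure.map_const, measure_univ, one_smul, Measure.pi_of_empty]
  · have : Unique ι := uniqueOfSubsingleton i
    convert (measurePreserving_funUnique μ ι).symm _
    rfl

section MeasurePreserving

variable [MeasurableSpace H] {μ : Measure H} {πL πR : H → H}

lemma measurePreserving_pathEval_of_forall_eq_nil [IsProbabilityMeasure μ] {ι : Type*}
    [Fintype ι] {p : ι → List Bool} (hp : Nonduplicating p) (hnil : ∀ i, p i = []) :
    MeasurePreserving (fun σ i => pathEval πL πR (p i) σ) μ (Measure.pi fun _ => μ) := by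
  have : Subsingleton ι := ⟨fun i j => hp.eq_of_eq_nil (hnil j) i⟩
  simpa only [hnil, pathEval] using measurePreserving_const_pi_of_subsingleton (ι := ι) μ

lemma measurePreserving_pathEval_append_singleton [SigmaFinite μ] {ι : Type*} [Fintype ι]
    (hpair : MeasurePreserving (fun σ => (πL σ, πR σ)) μ (μ.prod μ))
    (q : ι → List Bool) (d : ι → Bool)
    (hL : MeasurePreserving (fun σ (i : {i // d i = true}) => pathEval πL πR (q i) σ) μ
      (Measure.pi fun _ => μ))
    (hR : MeasurePreserving (fun σ (i : {i // ¬ d i = true}) => pathEval πL πR (q i) σ) μ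
      (Measure.pi fun _ => μ)) :
    MeasurePreserving (fun σ i => pathEval πL πR (q i ++ [d i]) σ) μ
      (Measure.pi fun _ => μ) := by
  have he := (measurePreserving_piEquivPiSubtypeProd (fun _ : ι => μ) (d · = true)).symm
  convert he.comp ((hL.prod hR).comp hpair) using 1
  funext σ i
  show _ = if h : d i = true then _ else _
  split_ifs with h <;> simp [pathEval_append_singleton, h]

lemma measurePreserving_pathEval_of_length_le [IsProbabilityMeasure μ]
    (hpair : MeasurePreserving (fun σ => (πL σ, πR σ)) μ (μ.prod μ)) (n : ℕ) {ι : Type*}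
    [Fintype ι] {p : ι → List Bool} (hp : Nonduplicating p) (hlen : ∀ i, (p i).length ≤ n) :
    MeasurePreserving (fun σ i => pathEval πL πR (p i) σ) μ (Measure.pi fun _ => μ) := by
  induction n generalizing ι with
  | zero =>
    exact measurePreserving_pathEval_of_forall_eq_nil hp
      fun i => List.eq_nil_of_length_eq_zero (Nat.le_zero.mp (hlen i))
  | succ n ih =>
    by_cases hnil : ∀ i, p i = []
    · exact measurePreserving_pathEval_of_forall_eq_nil hp hnil
    obtain ⟨i₀, hi₀⟩ := not_forall.mp hnil
    -- the empty path is a suffix of every path, so once one path is nonempty all of them are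
    have hne : ∀ i, p i ≠ [] := fun i hi => hi₀ (hp.eq_of_eq_nil hi i₀ ▸ hi)
    obtain ⟨q, d, rfl⟩ : ∃ (q : ι → List Bool) (d : ι → Bool), p = fun i => q i ++ [d i] :=
      ⟨_, _, funext fun i => (List.dropLast_append_getLast (hne i)).symm⟩
    have hqlen (i : ι) : (q i).length ≤ n := by simpa using hlen i
    refine measurePreserving_pathEval_append_singleton hpair q d ?_ ?_
    · exact ih (hp.comp_of_append_singleton Subtype.val_injective
        fun k k' => k.2.trans k'.2.symm) fun k => hqlen k
    · exact ih (hp.comp_of_append_singleton Subtype.val_injective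
        fun k k' => (Bool.eq_false_iff.mpr k.2).trans (Bool.eq_false_iff.mpr k'.2).symm)
        fun k => hqlen k

lemma measurePreserving_pathEval [IsProbabilityMeasure μ]
    (hpair : MeasurePreserving (fun σ => (πL σ, πR σ)) μ (μ.prod μ)) {ι : Type*}
    [Fintype ι] {p : ι → List Bool} (hp : Nonduplicating p) :
    MeasurePreserving (fun σ i => pathEval πL πR (p i) σ) μ (Measure.pi fun _ => μ) :=
  measurePreserving_pathEval_of_length_le hpair _ hp fun i =>
    Finset.le_sup (f := fun i => (p i).length) (Finset.mem_univ i)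

end MeasurePreserving

theorem nonduplicating_paths_iid
    [MeasurableSpace H] (μ : Measure H) [IsProbabilityMeasure μ]
    (πL πR : H → H) (hπL : Measurable πL) (hπR : Measurable πR)
    (hsplit : ∀ g : H × H → ENNReal, Measurable g →
      ∫⁻ σ, g (πL σ, πR σ) ∂μ = ∫⁻ σ₁, ∫⁻ σ₂, g (σ₁, σ₂) ∂μ ∂μ)
    (n : ℕ) (p : Fin n → List Bool)
    (hnd : ∀ i j : Fin n, i ≠ j → ¬ (p i <:+ p j)) :
    ∀ g : (Fin n → H) → ENNReal, Measurable g →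
      ∫⁻ σ, g (fun i => pathEval πL πR (p i) σ) ∂μ
        = ∫⁻ x, g x ∂(Measure.pi fun _ : Fin n => μ) := by
  intro g hg
  have hpair : MeasurePreserving (fun σ => (πL σ, πR σ)) μ (μ.prod μ) :=
    measurePreserving_of_lintegral_comp_eq (hπL.prodMk hπR) fun f hf => by
      rw [hsplit f hf, lintegral_prod _ hf.aemeasurable]
  exact (measurePreserving_pathEval hpair hnd).lintegral_comp hg

end PathsIID
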